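/- arXiv:1702.04737 — 2 statements merged into one kernel-verified Lean document; each statement's English description precedes it below -/
import Mathlib

section
/- Let V be a real symmetric 2n×2n matrix with V + iΩ_n ≻ 0, let X be a real 2m×2n matrix of rank 2m (2m ≤ 2n), and let Y be a real symmetric 2m×2m matrix with Y + iΩ_m − iXΩ_nXᵀ ⪰ 0. Then XVXᵀ + Y + iΩ_m ≻ 0; that is, the output covariance matrix V_N = XVXᵀ + Y of the Gaussian channel satisfies the strict uncertainty relation (the output state is faithful). -/
noncomputable section
open Matrix
open scoped ComplexOrder

/-- The standard `2n × 2n` symplectic form matrix `Ω = [[0, I], [-I, 0]]`. -/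
def Om (n : ℕ) : Matrix (Fin n ⊕ Fin n) (Fin n ⊕ Fin n) ℝ :=
  Matrix.fromBlocks 0 1 (-1) 0

/-- Complexification of a real matrix. -/
def cm {k l : Type*} (A : Matrix k l ℝ) : Matrix k l ℂ := A.map Complex.ofReal

/-!
Split `XVXᵀ + Y + iΩ_m` as `X (V + iΩ_n) Xᵀ + (Y + iΩ_m - iXΩ_nXᵀ)`. The first summand is
positive definite because `V + iΩ_n` is and `Xᵀ` is injective (full row rank survives
complexification), the second is positive semidefinite by complete positivity.
-/

section Complexification

variable {k l o : Type*}

lemma cm_add (A B : Matrix k l ℝ) : cm (A + B) = cm A + cm B :=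
  Matrix.map_add _ Complex.ofReal_add A B

lemma cm_mul [Fintype l] (A : Matrix k l ℝ) (B : Matrix l o ℝ) : cm (A * B) = cm A * cm B :=
  Matrix.map_mul (f := Complex.ofRealHom)

lemma cm_transpose (A : Matrix k l ℝ) : cm Aᵀ = (cm A)ᵀ := rfl

lemma cm_conjTranspose (A : Matrix k l ℝ) : (cm A)ᴴ = (cm A)ᵀ := by
  ext i j
  simp [cm]

lemma vecMul_cm_injective [Fintype k] [Fintype l] {A : Matrix k l ℝ}
    (hA : A.rank = Fintype.card k) : Function.Injective (cm A).vecMul := by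
  have hrows : LinearIndependent ℝ A.row :=
    linearIndependent_iff_card_eq_finrank_span.mpr (by rw [← hA, rank_eq_finrank_span_row]; rfl)
  have hrowsC : LinearIndependent ℂ (fun i ↦ algebraMap ℝ ℂ ∘ A.row i) :=
    linearIndependent_algebraMap_comp_iff.mpr hrows
  exact vecMul_injective_iff.mpr hrowsC

lemma cm_mul_mul_transpose_add_smul [Fintype l] (A : Matrix k l ℝ) (V : Matrix l l ℝ)
    (Y : Matrix k k ℝ) (S : Matrix k k ℝ) (T : Matrix l l ℝ) :
    cm (A * V * Aᵀ + Y) + Complex.I • cm S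
      = cm A * (cm V + Complex.I • cm T) * (cm A)ᴴ
        + (cm Y + Complex.I • cm S - Complex.I • (cm A * cm T * (cm A)ᵀ)) := by
  rw [cm_add, cm_mul, cm_mul, cm_transpose, cm_conjTranspose, Matrix.mul_add, Matrix.add_mul,
    Matrix.mul_smul, Matrix.smul_mul]
  abel

end Complexification

theorem output_state_faithful_general (n m : ℕ)
    (V : Matrix (Fin n ⊕ Fin n) (Fin n ⊕ Fin n) ℝ)
    (X : Matrix (Fin m ⊕ Fin m) (Fin n ⊕ Fin n) ℝ)
    (Y : Matrix (Fin m ⊕ Fin m) (Fin m ⊕ Fin m) ℝ)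
    (hVpd : (cm V + Complex.I • cm (Om n)).PosDef)
    (hXrank : X.rank = 2 * m)
    (hYcp : (cm Y + Complex.I • cm (Om m)
        - Complex.I • (cm X * cm (Om n) * (cm X)ᵀ)).PosSemidef) :
    (cm (X * V * Xᵀ + Y) + Complex.I • cm (Om m)).PosDef := by
  have hXinj : Function.Injective (cm X).vecMul :=
    vecMul_cm_injective (by rw [hXrank, Fintype.card_sum, Fintype.card_fin, two_mul])
  rw [cm_mul_mul_transpose_add_smul X V Y (Om m) (Om n)]
  exact (hVpd.mul_mul_conjTranspose_same hXinj).add_posSemidef hYcp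

/-- If `V + iΩ_n ≻ 0` (faithful input state), `X` is a real `2m × 2n` matrix of rank `2m`,
and `Y` is real symmetric with `Y + iΩ_m - iXΩ_nXᵀ ⪰ 0` (complete positivity of the channel),
then the output covariance matrix `V_N = XVXᵀ + Y` satisfies `V_N + iΩ_m ≻ 0`
(the output state is faithful). -/
theorem output_state_faithful (n m : ℕ) (hmn : m ≤ n)
    (V : Matrix (Fin n ⊕ Fin n) (Fin n ⊕ Fin n) ℝ)
    (X : Matrix (Fin m ⊕ Fin m) (Fin n ⊕ Fin n) ℝ)
    (Y : Matrix (Fin m ⊕ Fin m) (Fin m ⊕ Fin m) ℝ)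
    (hV : V.IsSymm)
    (hVpd : (cm V + Complex.I • cm (Om n)).PosDef)
    (hXrank : X.rank = 2 * m)
    (hY : Y.IsSymm)
    (hYcp : (cm Y + Complex.I • cm (Om m)
        - Complex.I • (cm X * cm (Om n) * (cm X)ᵀ)).PosSemidef) :
    (cm (X * V * Xᵀ + Y) + Complex.I • cm (Om m)).PosDef :=
  output_state_faithful_general n m V X Y hVpd hXrank hYcp
end
end

section
/- Let V be a real symmetric 2n×2n matrix with V + iΩ ≻ 0. Then there exists a real 2n×2n matrix M such that M² = I + (VΩ)^{-2}, M commutes with VΩ, and every complex eigenvalue of M is a positive real number (i.e., a principal square-root matrix for V exists). -/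
/-!
Write `V = S²` with `S = √V` (note `V ≻ 0`, being the real part of `V + iΩ`) and put
`T = S⁻¹ΩS⁻¹`, a real skew matrix. Congruence by `S` turns `V + iΩ ≻ 0` into `1 + iT ≻ 0`;
transposing gives `1 - iT ≻ 0`, and the product of these two commuting positive matrices is
`1 + T² ≻ 0`. Its positive square root `R` commutes with `T`, and since `(VΩ)⁻¹ = -STS⁻¹`, the
matrix `M = SRS⁻¹` squares to `1 + (VΩ)⁻²` and commutes with `VΩ`. Being similar to `R ≻ 0`,
it has positive eigenvalues.
-/

noncomputable section
open Matrix
open scoped ComplexOrder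

lemma Units.conj_mul_conj {M : Type*} [Monoid M] (u : Mˣ) (a b : M) :
    u * a * ↑u⁻¹ * (u * b * ↑u⁻¹) = u * (a * b) * ↑u⁻¹ := by
  simp only [mul_assoc, Units.inv_mul_cancel_left]

lemma Units.conj_one_add {R : Type*} [Ring R] (u : Rˣ) (a : R) :
    u * (1 + a) * ↑u⁻¹ = 1 + u * a * ↑u⁻¹ := by
  rw [mul_add, add_mul, mul_one, Units.mul_inv]

lemma Commute.units_conj {M : Type*} [Monoid M] (u : Mˣ) {a b : M} (h : Commute a b) :
    Commute (u * a * ↑u⁻¹) (u * b * ↑u⁻¹) := by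
  simp only [Commute, SemiconjBy, Units.conj_mul_conj, h.eq]

namespace Matrix

variable {k : Type*} [Fintype k]

lemma commute_of_commute_nonsing_inv [DecidableEq k] {K : Type*} [CommRing K]
    {A B : Matrix k k K} (hB : IsUnit B) (h : Commute A B⁻¹) : Commute A B := by
  rw [← hB.unit_spec, ← coe_units_inv] at h
  rw [← hB.unit_spec]
  exact Commute.units_inv_right_iff.mp h

lemma cm_mulVec (A : Matrix k k ℝ) (x : k → ℝ) :
    cm A *ᵥ (Complex.ofReal ∘ x) = Complex.ofReal ∘ (A *ᵥ x) :=
  funext fun i => (Complex.ofRealHom.map_mulVec A x i).symm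

lemma posDef_of_posDef_cm {A : Matrix k k ℝ} (h : (cm A).PosDef) : A.PosDef := by
  refine .of_dotProduct_mulVec_pos ?_ fun x hx => ?_
  · ext i j
    simpa [cm] using congr_fun₂ h.isHermitian i j
  · have hx' : Complex.ofReal ∘ x ≠ 0 := fun h0 =>
      hx (funext fun i => Complex.ofReal_injective (congr_fun h0 i))
    have hstar : star (Complex.ofReal ∘ x) = Complex.ofReal ∘ x :=
      funext fun i => Complex.conj_ofReal (x i)
    have hdot : Complex.ofReal ∘ x ⬝ᵥ Complex.ofReal ∘ (A *ᵥ x) = ((x ⬝ᵥ A *ᵥ x : ℝ) : ℂ) :=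
      (Complex.ofRealHom.map_dotProduct _ _).symm
    have hpos := h.dotProduct_mulVec_pos hx'
    rwa [cm_mulVec, hstar, hdot, Complex.zero_lt_real] at hpos

lemma posDef_of_posDef_cm_add_I_smul {A B : Matrix k k ℝ} (hA : A.IsSymm) (hB : Bᵀ = -B)
    (h : (cm A + Complex.I • cm B).PosDef) : A.PosDef := by
  have hsum : cm A + Complex.I • cm B + (cm A + Complex.I • cm B)ᵀ = (2 : ℂ) • cm A := by
    ext i j
    have hBji : B j i = -B i j := by
      have := congr_fun₂ hB i j
      simp only [transpose_apply, neg_apply] at this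
      linarith
    simp [cm, hBji, hA.apply]
    ring
  refine posDef_of_posDef_cm ?_
  have hpos := (h.add h.transpose).smul (inv_pos.mpr (two_pos : (0 : ℂ) < 2))
  rwa [hsum, smul_smul, inv_mul_cancel₀ two_ne_zero, one_smul] at hpos

variable [DecidableEq k]

lemma cm_eq_mapMatrix (A : Matrix k k ℝ) : cm A = Complex.ofRealHom.mapMatrix A := rfl

omit [Fintype k] in
lemma cm_one : cm (1 : Matrix k k ℝ) = 1 :=
  Matrix.map_one _ Complex.ofReal_zero Complex.ofReal_one

omit [Fintype k] [DecidableEq k] in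
lemma cm_transpose (A : Matrix k k ℝ) : (cm A)ᵀ = cm Aᵀ := rfl

lemma one_add_I_smul_mul_one_sub_I_smul (X : Matrix k k ℂ) :
    (1 + Complex.I • X) * (1 - Complex.I • X) = 1 + X * X := by
  simp only [mul_sub, add_mul, one_mul, mul_one, smul_mul_smul_comm, Complex.I_mul_I,
    neg_one_smul]
  abel

section MatrixOrder

open scoped MatrixOrder

lemma posDef_one_add_mul_self_of_posDef_one_add_I_smul {T : Matrix k k ℝ} (hT : Tᵀ = -T)
    (h : (1 + Complex.I • cm T).PosDef) : (1 + T * T).PosDef := by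
  have htr : (1 + Complex.I • cm T)ᵀ = 1 - Complex.I • cm T := by
    rw [transpose_add, transpose_one, transpose_smul, cm_transpose, hT, cm_eq_mapMatrix, map_neg,
      smul_neg, ← sub_eq_add_neg, cm_eq_mapMatrix]
  have hcomm : Commute (1 + Complex.I • cm T) (1 - Complex.I • cm T) := by
    have h' := one_add_I_smul_mul_one_sub_I_smul (-cm T)
    rw [smul_neg, sub_neg_eq_add, ← sub_eq_add_neg, neg_mul_neg] at h'
    exact (one_add_I_smul_mul_one_sub_I_smul (cm T)).trans h'.symm
  have hprod : cm (1 + T * T) = 1 + cm T * cm T := by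
    simp only [cm_eq_mapMatrix, map_add, map_one, map_mul]
  refine posDef_of_posDef_cm ?_
  rw [hprod, ← one_add_I_smul_mul_one_sub_I_smul]
  exact ((h.isStrictlyPositive.commute_iff (htr ▸ h.transpose).isStrictlyPositive).mp
    hcomm).posDef

lemma PosDef.exists_sqrt {C : Matrix k k ℝ} (hC : C.PosDef) :
    ∃ R : Matrix k k ℝ, R.PosDef ∧ R * R = C ∧ ∀ X, Commute C X → Commute R X :=
  ⟨CFC.sqrt C, hC.isStrictlyPositive.sqrt.posDef, CFC.sqrt_mul_sqrt_self C hC.posSemidef.nonneg,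
    fun _ h => h.cfcₙ_nnreal _⟩

end MatrixOrder

lemma cm_add_I_smul_congr {S : Matrix k k ℝ} (hS : S.IsSymm) (A B : Matrix k k ℝ) :
    cm (S * A * S) + Complex.I • cm (S * B * S) =
      star (cm S) * (cm A + Complex.I • cm B) * cm S := by
  have hstar : star (cm S) = cm S := by
    ext i j
    simp [cm, hS.apply]
  rw [hstar]
  simp only [cm_eq_mapMatrix, map_mul, mul_add, add_mul, Matrix.mul_smul, Matrix.smul_mul]

section SymmetricUnit

variable {u : (Matrix k k ℝ)ˣ} (hu : u.val.IsSymm)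
include hu

lemma transpose_units_inv_conj (B : Matrix k k ℝ) :
    (u⁻¹.val * B * u⁻¹.val)ᵀ = u⁻¹.val * Bᵀ * u⁻¹.val := by
  simp [transpose_mul, transpose_nonsing_inv, hu.eq, mul_assoc]

lemma posDef_one_add_I_smul_cm_units_inv_conj {B : Matrix k k ℝ}
    (h : (cm (u.val * u.val) + Complex.I • cm B).PosDef) :
    (1 + Complex.I • cm (u⁻¹.val * B * u⁻¹.val)).PosDef := by
  have hcongr := cm_add_I_smul_congr hu 1 (u⁻¹.val * B * u⁻¹.val)
  rw [mul_one, cm_one, show u.val * (u⁻¹.val * B * u⁻¹.val) * u.val = B by simp [mul_assoc]]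
    at hcongr
  have hcu : IsUnit (cm u.val) := u.isUnit.map Complex.ofRealHom.mapMatrix
  rwa [← hcu.posDef_star_left_conjugate_iff, ← hcongr]

end SymmetricUnit

lemma PosDef.isRoot_charpoly_cm {R : Matrix k k ℝ} (hR : R.PosDef) {μ : ℂ}
    (h : (cm R).charpoly.IsRoot μ) : μ.im = 0 ∧ 0 < μ.re := by
  rw [cm_eq_mapMatrix, RingHom.mapMatrix_apply, charpoly_map, hR.isHermitian.charpoly_eq,
    Polynomial.map_prod, Polynomial.IsRoot, Polynomial.eval_prod, Finset.prod_eq_zero_iff] at h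
  obtain ⟨i, -, hi⟩ := h
  simp only [Polynomial.map_sub, Polynomial.map_X, Polynomial.map_C, Polynomial.eval_sub,
    Polynomial.eval_X, Polynomial.eval_C, sub_eq_zero] at hi
  rw [hi]
  exact ⟨Complex.ofReal_im _, hR.eigenvalues_pos i⟩

lemma charpoly_cm_units_conj (u : (Matrix k k ℝ)ˣ) (R : Matrix k k ℝ) :
    (cm (u.val * R * u⁻¹.val)).charpoly = (cm R).charpoly := by
  simp only [cm_eq_mapMatrix, RingHom.mapMatrix_apply, charpoly_map, coe_units_inv,
    charpoly_units_conj]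

end Matrix

lemma Om_transpose (n : ℕ) : (Om n)ᵀ = -Om n := by
  simp [Om, fromBlocks_transpose, fromBlocks_neg]

lemma Om_mul_Om (n : ℕ) : Om n * Om n = -1 := by
  simp [Om, fromBlocks_multiply, fromBlocks_neg, ← fromBlocks_one]

lemma Om_mul_neg_Om (n : ℕ) : Om n * -Om n = 1 := by
  rw [mul_neg, Om_mul_Om, neg_neg]

lemma inv_Om (n : ℕ) : (Om n)⁻¹ = -Om n :=
  inv_eq_right_inv (Om_mul_neg_Om n)

/-- If `V` is real symmetric with `V + iΩ ≻ 0`, then a principal square-root matrix for `V`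
exists: a real matrix `M` with `M² = I + (VΩ)⁻²`, commuting with `VΩ`, and all of whose complex
eigenvalues are positive reals. -/
theorem principal_sqrt_exists (n : ℕ)
    (V : Matrix (Fin n ⊕ Fin n) (Fin n ⊕ Fin n) ℝ)
    (hV : V.IsSymm)
    (hVpd : (cm V + Complex.I • cm (Om n)).PosDef) :
    ∃ M : Matrix (Fin n ⊕ Fin n) (Fin n ⊕ Fin n) ℝ,
      M * M = 1 + ((V * Om n)⁻¹) ^ 2
        ∧ M * (V * Om n) = (V * Om n) * M
        ∧ ∀ μ : ℂ, (cm M).charpoly.IsRoot μ → μ.im = 0 ∧ 0 < μ.re := by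
  obtain ⟨S, hS, rfl, -⟩ := (posDef_of_posDef_cm_add_I_smul hV (Om_transpose n) hVpd).exists_sqrt
  obtain ⟨u, rfl⟩ := hS.isUnit
  have hu : u.val.IsSymm := isHermitian_iff_isSymm.mp hS.isHermitian
  set T := u⁻¹.val * Om n * u⁻¹.val
  have hT : Tᵀ = -T := by rw [transpose_units_inv_conj hu, Om_transpose, mul_neg, neg_mul]
  obtain ⟨R, hR, hRR, hRcomm⟩ := (posDef_one_add_mul_self_of_posDef_one_add_I_smul hT
    (posDef_one_add_I_smul_cm_units_inv_conj hu hVpd)).exists_sqrt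
  have hRT : Commute R T := hRcomm T ((Commute.one_left T).add_left ((Commute.refl T).mul_left
    (Commute.refl T)))
  have hinv : (u.val * u.val * Om n)⁻¹ = u.val * -T * u⁻¹.val := by
    simp [T, Matrix.mul_inv_rev, inv_Om, mul_assoc]
  refine ⟨u.val * R * u⁻¹.val, ?_, ?_, ?_⟩
  · rw [hinv, sq, Units.conj_mul_conj, Units.conj_mul_conj, hRR, neg_mul_neg, Units.conj_one_add]
  · refine (commute_of_commute_nonsing_inv ?_ ?_).eq
    · exact (u.isUnit.mul u.isUnit).mul (IsUnit.of_mul_eq_one _ (Om_mul_neg_Om n))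
    · rw [hinv]
      exact hRT.neg_right.units_conj u
  · intro μ hμ
    rw [charpoly_cm_units_conj] at hμ
    exact hR.isRoot_charpoly_cm hμ
end
end
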